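/- Let n ≥ 1, let U ⊆ ℝⁿ be open, and let b : ℝⁿ → ℝ be a smooth (C^∞) function such that ‖∇b(x)‖ = 1 for every x ∈ U. Define functions g_k on U inductively by g₀ = Δb and g_{k+1}(x) = ⟨∇g_k(x), ∇b(x)⟩. Then for every natural number J ≥ 0 and every x ∈ U, g_J(x) = (−1)^J · J! · Σᵢ κᵢ(x)^{J+1}, where κ₁(x), …, κₙ(x) are the eigenvalues (with multiplicity) of the real symmetric Hessian matrix H(x) of b at x. -/

import Mathlib

/-!
Differentiating the eikonal identity `|∇b|² = 1` gives `H ∇b = 0`; differentiating once more and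
using the symmetry of third derivatives gives the Riccati equation `∂_ν H = -H²` along `∇b`.
The Leibniz rule then yields `∂_ν Hᵐ = -m Hᵐ⁺¹`, so by induction
`g_J = (-1)^J J! tr H^{J+1}`, and `tr H^{J+1} = Σ κᵢ^{J+1}` by the spectral theorem.
-/

/-- The `i`-th partial derivative `∂ᵢ b` at `x`. -/
noncomputable def pd {n : ℕ} (b : (Fin n → ℝ) → ℝ) (i : Fin n) (x : Fin n → ℝ) : ℝ :=
  fderiv ℝ b x (Pi.single i 1)

/-- The Hessian matrix of `b` at `x`, with entries `∂ᵢ∂ⱼ b (x)`. -/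
noncomputable def hess {n : ℕ} (b : (Fin n → ℝ) → ℝ) (x : Fin n → ℝ) :
    Matrix (Fin n) (Fin n) ℝ :=
  Matrix.of fun i j => pd (pd b j) i x

/-- Iterated derivatives of the mean curvature `Δb = tr H` along the unit normal
direction `∇b`:  `g₀ = Δb` and `g_{k+1} = ⟨∇g_k, ∇b⟩`. -/
noncomputable def normalIter {n : ℕ} (b : (Fin n → ℝ) → ℝ) : ℕ → (Fin n → ℝ) → ℝ
  | 0 => fun x => Matrix.trace (hess b x)
  | J + 1 => fun x => ∑ i, pd (normalIter b J) i x * pd b i x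

open scoped ContDiff Nat

theorem Matrix.IsHermitian.trace_pow_eq_sum_eigenvalues_pow {𝕜 ι : Type*} [RCLike 𝕜] [Fintype ι]
    [DecidableEq ι] {A : Matrix ι ι 𝕜} (hA : A.IsHermitian) (m : ℕ) :
    (A ^ m).trace = ∑ i, (hA.eigenvalues i : 𝕜) ^ m := by
  conv_lhs => rw [hA.spectral_theorem, ← map_pow, Unitary.conjStarAlgAut_apply,
    Matrix.trace_mul_cycle, Unitary.coe_star_mul_self, one_mul, Matrix.diagonal_pow,
    Matrix.trace_diagonal]
  simp

variable {n : ℕ}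

lemma pd_pd_comm {f : (Fin n → ℝ) → ℝ} {x : Fin n → ℝ} (hf : ContDiffAt ℝ 2 f x) (i j : Fin n) :
    pd (pd f i) j x = pd (pd f j) i x := by
  have hdiff : DifferentiableAt ℝ (fderiv ℝ f) x :=
    (hf.fderiv_right (m := 1) (by norm_num)).differentiableAt one_ne_zero
  have key : ∀ i j, pd (pd f i) j x = fderiv ℝ (fderiv ℝ f) x (Pi.single j 1) (Pi.single i 1) := by
    intro i j
    change fderiv ℝ (fun y => fderiv ℝ f y (Pi.single i 1)) x (Pi.single j 1) = _
    rw [fderiv_clm_apply hdiff (differentiableAt_const _)]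
    simp
  rw [key, key, hf.isSymmSndFDerivAt (by simp)]

lemma contDiff_pd {f : (Fin n → ℝ) → ℝ} (hf : ContDiff ℝ ∞ f) (i : Fin n) :
    ContDiff ℝ ∞ (pd f i) :=
  (hf.fderiv_right (by simp)).clm_apply contDiff_const

lemma pd_eq_zero_of_eventuallyEq_const {f : (Fin n → ℝ) → ℝ} {x : Fin n → ℝ} {c : ℝ}
    (hf : f =ᶠ[nhds x] fun _ => c) (i : Fin n) : pd f i x = 0 := by
  simp [pd, hf.fderiv_eq]

lemma pd_sum_mul {ι : Type*} {s : Finset ι} {f g : ι → (Fin n → ℝ) → ℝ} {x : Fin n → ℝ}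
    (hf : ∀ k ∈ s, DifferentiableAt ℝ (f k) x) (hg : ∀ k ∈ s, DifferentiableAt ℝ (g k) x)
    (i : Fin n) :
    pd (fun y => ∑ k ∈ s, f k y * g k y) i x
      = ∑ k ∈ s, (pd (f k) i x * g k x + f k x * pd (g k) i x) := by
  unfold pd
  rw [fderiv_fun_sum (A := fun k y => f k y * g k y) fun k hk => (hf k hk).mul (hg k hk)]
  simp only [sum_apply]
  refine Finset.sum_congr rfl fun k hk => ?_
  rw [fderiv_fun_mul (hf k hk) (hg k hk)]
  simp only [add_apply, smul_apply, smul_eq_mul]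
  ring

noncomputable def normalDeriv (b f : (Fin n → ℝ) → ℝ) (x : Fin n → ℝ) : ℝ :=
  fderiv ℝ f x fun k => pd b k x

lemma normalDeriv_eq_sum (b f : (Fin n → ℝ) → ℝ) (x : Fin n → ℝ) :
    normalDeriv b f x = ∑ k, pd b k x * pd f k x := by
  rw [normalDeriv, pi_eq_sum_univ' fun k => pd b k x]
  simp [pd]

variable {b f g : (Fin n → ℝ) → ℝ} {x : Fin n → ℝ}

lemma normalDeriv_congr (h : f =ᶠ[nhds x] g) : normalDeriv b f x = normalDeriv b g x := by
  rw [normalDeriv, normalDeriv, h.fderiv_eq]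

lemma normalDeriv_mul (hf : DifferentiableAt ℝ f x) (hg : DifferentiableAt ℝ g x) :
    normalDeriv b (fun y => f y * g y) x = normalDeriv b f x * g x + f x * normalDeriv b g x := by
  simp only [normalDeriv, fderiv_fun_mul hf hg, add_apply, smul_apply, smul_eq_mul]
  ring

lemma normalDeriv_const_mul (hf : DifferentiableAt ℝ f x) (c : ℝ) :
    normalDeriv b (fun y => c * f y) x = c * normalDeriv b f x := by
  simp [normalDeriv, fderiv_const_mul hf]

lemma normalDeriv_sum {ι : Type*} {s : Finset ι} {f : ι → (Fin n → ℝ) → ℝ}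
    (hf : ∀ k ∈ s, DifferentiableAt ℝ (f k) x) :
    normalDeriv b (fun y => ∑ k ∈ s, f k y) x = ∑ k ∈ s, normalDeriv b (f k) x := by
  simp [normalDeriv, fderiv_fun_sum hf]

lemma differentiable_pow_apply {E ι : Type*} [NormedAddCommGroup E] [NormedSpace ℝ E]
    [Fintype ι] [DecidableEq ι] {M : E → Matrix ι ι ℝ}
    (hM : ∀ i j, Differentiable ℝ fun y => M y i j) (m : ℕ) (i j : ι) :
    Differentiable ℝ fun y => (M y ^ m) i j := by
  induction m generalizing i j with
  | zero => simp only [pow_zero, Matrix.one_apply]; exact differentiable_const _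
  | succ m ih =>
    simp only [pow_succ, Matrix.mul_apply]
    exact Differentiable.fun_sum fun k _ => (ih i k).mul (hM k j)

noncomputable def normalDerivMatrix {ι κ : Type*} (b : (Fin n → ℝ) → ℝ)
    (M : (Fin n → ℝ) → Matrix ι κ ℝ) (x : Fin n → ℝ) : Matrix ι κ ℝ :=
  Matrix.of fun i j => normalDeriv b (fun y => M y i j) x

lemma normalDerivMatrix_mul {ι κ μ : Type*} [Fintype κ] {M : (Fin n → ℝ) → Matrix ι κ ℝ}
    {N : (Fin n → ℝ) → Matrix κ μ ℝ} (hM : ∀ i j, DifferentiableAt ℝ (fun y => M y i j) x)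
    (hN : ∀ i j, DifferentiableAt ℝ (fun y => N y i j) x) :
    normalDerivMatrix b (fun y => M y * N y) x
      = normalDerivMatrix b M x * N x + M x * normalDerivMatrix b N x := by
  ext i j
  simp only [normalDerivMatrix, Matrix.of_apply, Matrix.mul_apply, Matrix.add_apply,
    ← Finset.sum_add_distrib]
  rw [normalDeriv_sum (f := fun k y => M y i k * N y k j) fun k _ => (hM i k).mul (hN k j)]
  exact Finset.sum_congr rfl fun k _ => normalDeriv_mul (hM i k) (hN k j)

lemma normalDeriv_trace {ι : Type*} [Fintype ι] {M : (Fin n → ℝ) → Matrix ι ι ℝ}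
    (hM : ∀ i, DifferentiableAt ℝ (fun y => M y i i) x) :
    normalDeriv b (fun y => (M y).trace) x = (normalDerivMatrix b M x).trace :=
  normalDeriv_sum fun i _ => hM i

lemma normalDerivMatrix_const {ι κ : Type*} (A : Matrix ι κ ℝ) :
    normalDerivMatrix b (fun _ => A) x = 0 := by
  ext i j
  simp [normalDerivMatrix, normalDeriv]

lemma hess_apply (b : (Fin n → ℝ) → ℝ) (x : Fin n → ℝ) (i j : Fin n) :
    hess b x i j = pd (pd b j) i x := rfl

lemma hess_comm (hb : ContDiff ℝ 2 b) (x : Fin n → ℝ) (i j : Fin n) :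
    hess b x i j = hess b x j i :=
  pd_pd_comm hb.contDiffAt j i

lemma differentiable_hess_apply (hb : ContDiff ℝ ∞ b) (i j : Fin n) :
    Differentiable ℝ fun y => hess b y i j :=
  (contDiff_pd (contDiff_pd hb j) i).differentiable (by simp)

lemma differentiable_hess_pow_apply (hb : ContDiff ℝ ∞ b) (m : ℕ) (i j : Fin n) :
    Differentiable ℝ fun y => (hess b y ^ m) i j :=
  differentiable_pow_apply (differentiable_hess_apply hb) m i j

section Eikonal

variable {U : Set (Fin n → ℝ)}

lemma hess_mul_grad_eq_zero (hU : IsOpen U) (hb : ContDiff ℝ ∞ b)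
    (heik : ∀ x ∈ U, ∑ k, (pd b k x) ^ 2 = 1) (hx : x ∈ U) (i : Fin n) :
    ∑ k, hess b x i k * pd b k x = 0 := by
  have hdiff : ∀ k, DifferentiableAt ℝ (pd b k) x :=
    fun k => (contDiff_pd hb k).differentiable (by simp) x
  have hconst : (fun y => ∑ k, pd b k y * pd b k y) =ᶠ[nhds x] fun _ => 1 :=
    Filter.eventually_of_mem (hU.mem_nhds hx) fun y hy => by simpa [sq] using heik y hy
  have h := pd_eq_zero_of_eventuallyEq_const hconst i
  rw [pd_sum_mul (fun k _ => hdiff k) (fun k _ => hdiff k)] at h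
  have hsym : ∀ k, pd (pd b k) i x * pd b k x + pd b k x * pd (pd b k) i x
      = 2 * (hess b x i k * pd b k x) := fun k => by rw [hess_apply]; ring
  rw [Finset.sum_congr rfl fun k _ => hsym k, ← Finset.mul_sum] at h
  linarith

lemma normalDeriv_hess_apply (hU : IsOpen U) (hb : ContDiff ℝ ∞ b)
    (heik : ∀ x ∈ U, ∑ k, (pd b k x) ^ 2 = 1) (hx : x ∈ U) (i j : Fin n) :
    normalDeriv b (fun y => hess b y i j) x = -(hess b x ^ 2) i j := by
  have hconst : (fun y => ∑ k, hess b y j k * pd b k y) =ᶠ[nhds x] fun _ => 0 :=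
    Filter.eventually_of_mem (hU.mem_nhds hx) fun y hy => hess_mul_grad_eq_zero hU hb heik hy j
  have h := pd_eq_zero_of_eventuallyEq_const hconst i
  rw [pd_sum_mul (fun k _ => (differentiable_hess_apply hb j k).differentiableAt)
    (fun k _ => (contDiff_pd hb k).differentiable (by simp) x)] at h
  have two_le : (2 : WithTop ℕ∞) ≤ ∞ := WithTop.coe_le_coe.mpr le_top
  have hb2 : ContDiff ℝ 2 b := hb.of_le two_le
  have hthird : ∀ k, pd (fun y => hess b y j k) i x = pd (fun y => hess b y i j) k x := by
    intro k
    have hjk : (fun y => hess b y j k) = pd (pd b j) k :=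
      funext fun y => (pd_pd_comm hb2.contDiffAt j k).symm
    rw [hjk, pd_pd_comm ((contDiff_pd hb j).of_le two_le).contDiffAt k i]
    rfl
  have hsq : ∀ k, hess b x j k * pd (pd b k) i x = hess b x i k * hess b x k j := fun k => by
    rw [← hess_apply, hess_comm hb2 x j k, mul_comm]
  simp only [hthird, hsq, mul_comm (pd (fun y => hess b y i j) _ x), Finset.sum_add_distrib] at h
  rw [normalDeriv_eq_sum, pow_two, Matrix.mul_apply]
  linear_combination h

lemma normalDerivMatrix_hess (hU : IsOpen U) (hb : ContDiff ℝ ∞ b)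
    (heik : ∀ x ∈ U, ∑ k, (pd b k x) ^ 2 = 1) (hx : x ∈ U) :
    normalDerivMatrix b (hess b) x = -(hess b x ^ 2) := by
  ext i j
  exact normalDeriv_hess_apply hU hb heik hx i j

lemma normalDerivMatrix_hess_pow (hU : IsOpen U) (hb : ContDiff ℝ ∞ b)
    (heik : ∀ x ∈ U, ∑ k, (pd b k x) ^ 2 = 1) (hx : x ∈ U) (m : ℕ) :
    normalDerivMatrix b (fun y => hess b y ^ m) x = -(m : ℝ) • hess b x ^ (m + 1) := by
  induction m with
  | zero => simp only [pow_zero, normalDerivMatrix_const, Nat.cast_zero, neg_zero, zero_smul]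
  | succ m ih =>
    conv_lhs => simp only [pow_succ]
    rw [normalDerivMatrix_mul (fun i j => differentiable_hess_pow_apply hb m i j x)
      (fun i j => differentiable_hess_apply hb i j x), ih, normalDerivMatrix_hess hU hb heik hx,
      smul_mul_assoc, ← pow_succ, mul_neg, ← pow_add]
    push_cast
    module

lemma normalIter_succ (b : (Fin n → ℝ) → ℝ) (J : ℕ) (x : Fin n → ℝ) :
    normalIter b (J + 1) x = normalDeriv b (normalIter b J) x := by
  simp only [normalIter, normalDeriv_eq_sum, mul_comm]

lemma normalIter_eq_trace_hess_pow (hU : IsOpen U) (hb : ContDiff ℝ ∞ b)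
    (heik : ∀ x ∈ U, ∑ k, (pd b k x) ^ 2 = 1) (J : ℕ) :
    ∀ x ∈ U, normalIter b J x = (-1) ^ J * J ! * (hess b x ^ (J + 1)).trace := by
  induction J with
  | zero => intro x _; simp [normalIter]
  | succ J ih =>
    intro x hx
    have hloc : normalIter b J =ᶠ[nhds x]
        fun y => (-1) ^ J * J ! * (hess b y ^ (J + 1)).trace :=
      Filter.eventually_of_mem (hU.mem_nhds hx) ih
    have hdiff := fun i j => differentiable_hess_pow_apply hb (J + 1) i j x
    have htrace : DifferentiableAt ℝ (fun y => (hess b y ^ (J + 1)).trace) x :=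
      DifferentiableAt.fun_sum fun i _ => hdiff i i
    rw [normalIter_succ, normalDeriv_congr hloc, normalDeriv_const_mul htrace,
      normalDeriv_trace fun i => hdiff i i, normalDerivMatrix_hess_pow hU hb heik hx,
      Matrix.trace_smul, Nat.factorial_succ]
    push_cast
    ring

end Eikonal

theorem iterated_normal_deriv_mean_curvature_eigenvalues_general {n : ℕ}
    (U : Set (Fin n → ℝ)) (hU : IsOpen U)
    (b : (Fin n → ℝ) → ℝ) (hb : ContDiff ℝ (⊤ : ℕ∞) b)
    (heik : ∀ x ∈ U, ∑ k, (pd b k x) ^ 2 = 1) :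
    ∀ J : ℕ, ∀ x ∈ U, ∀ hH : (hess b x).IsHermitian,
      normalIter b J x
        = (-1 : ℝ) ^ J * (Nat.factorial J : ℝ) * ∑ i, (hH.eigenvalues i) ^ (J + 1) := by
  intro J x hx hH
  rw [normalIter_eq_trace_hess_pow hU hb heik J x hx, hH.trace_pow_eq_sum_eigenvalues_pow]
  rfl

/-- If `b` is smooth and satisfies the eikonal identity `‖∇b‖ = 1` on an open set,
then all iterated normal derivatives of the mean curvature are determined by the
eigenvalues (principal curvatures) of the symmetric Hessian:
`∂_ν^J κ = (-1)^J · J! · Σᵢ κᵢ^{J+1}`. -/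
theorem iterated_normal_deriv_mean_curvature_eigenvalues {n : ℕ} (hn : 1 ≤ n)
    (U : Set (Fin n → ℝ)) (hU : IsOpen U)
    (b : (Fin n → ℝ) → ℝ) (hb : ContDiff ℝ (⊤ : ℕ∞) b)
    (heik : ∀ x ∈ U, ∑ k, (pd b k x) ^ 2 = 1) :
    ∀ J : ℕ, ∀ x ∈ U, ∀ hH : (hess b x).IsHermitian,
      normalIter b J x
        = (-1 : ℝ) ^ J * (Nat.factorial J : ℝ) * ∑ i, (hH.eigenvalues i) ^ (J + 1) :=
  iterated_normal_deriv_mean_curvature_eigenvalues_general U hU b hb heik
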